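/- arXiv:2102.12474 — 3 statements merged into one kernel-verified Lean document; each statement's English description precedes it below -/
import Mathlib

section
/- For every complex symmetric N×N matrix B and every K ≥ N, there exists an N×K complex matrix X such that B = X·Xᵀ, where Xᵀ is the (non-conjugate) transpose of X. -/
/-!
Over an algebraically closed field in which `2` is invertible, the symmetric bilinear form
`(x, y) ↦ xᵀ B y` has an orthogonal basis, so `B = Qᵀ D Q` with `D` diagonal. Writing
`D = C * C` with `C` the diagonal of square roots gives `B = Y Yᵀ` for `Y = Qᵀ C`, a square
matrix; padding `Y` with zero columns gives any larger number of columns.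
-/

open Matrix

namespace Matrix

variable {n p K R : Type*}

theorem submatrix_one_mul_transpose_submatrix_one [DecidableEq n] [Semiring R] [Fintype p]
    [DecidableEq p] {e : n → p} (he : Function.Injective e) :
    (1 : Matrix p p R).submatrix e id * ((1 : Matrix p p R).submatrix e id)ᵀ = 1 := by
  rw [transpose_submatrix, transpose_one, ← submatrix_mul _ _ _ _ _ Function.bijective_id,
    Matrix.one_mul, submatrix_one _ he]

section Field

variable [Fintype n] [DecidableEq n] [Field K] [Invertible (2 : K)]

theorem IsSymm.exists_transpose_mul_diagonal_mul_eq {B : Matrix n n K} (hB : B.IsSymm) :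
    ∃ (Q : Matrix (Fin (Fintype.card n)) n K) (d : Fin (Fintype.card n) → K),
      Qᵀ * diagonal d * Q = B := by
  obtain ⟨v, hv⟩ := LinearMap.BilinForm.exists_orthogonal_basis
    (LinearMap.BilinForm.isSymm_iff.mp (isSymm_toBilin'_iff_isSymm.mpr hB))
  have hrank : Module.finrank K (n → K) = Fintype.card n := Module.finrank_fintype_fun_eq_card K
  let w := v.reindex (finCongr hrank)
  refine ⟨w.toMatrix (Pi.basisFun K n), fun i => B.toBilin' (w i) (w i), ?_⟩
  have hdiag : LinearMap.BilinForm.toMatrix w B.toBilin' =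
      diagonal fun i => B.toBilin' (w i) (w i) := by
    ext i j
    rcases eq_or_ne i j with rfl | hij
    · simp [LinearMap.BilinForm.toMatrix_apply]
    · rw [LinearMap.BilinForm.toMatrix_apply, diagonal_apply_ne _ hij]
      simpa [w] using hv ((finCongr hrank).symm.injective.ne hij)
  rw [← hdiag, LinearMap.BilinForm.toMatrix_mul_basis_toMatrix,
    LinearMap.BilinForm.toMatrix_basisFun, LinearMap.BilinForm.toMatrix'_toBilin']

theorem IsSymm.exists_eq_mul_transpose [IsAlgClosed K] {B : Matrix n n K} (hB : B.IsSymm) :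
    ∃ Y : Matrix n (Fin (Fintype.card n)) K, B = Y * Yᵀ := by
  obtain ⟨Q, d, hQd⟩ := hB.exists_transpose_mul_diagonal_mul_eq
  choose c hc using fun i => IsAlgClosed.exists_pow_nat_eq (d i) two_pos
  have hd : diagonal d = diagonal c * diagonal c := by
    rw [diagonal_mul_diagonal]; simp_rw [← sq, hc]
  refine ⟨Qᵀ * diagonal c, ?_⟩
  rw [transpose_mul, diagonal_transpose, transpose_transpose, ← hQd, hd]
  simp only [Matrix.mul_assoc]

theorem IsSymm.exists_eq_mul_transpose_of_card_le [IsAlgClosed K] [Fintype p] [DecidableEq p]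
    {B : Matrix n n K} (hB : B.IsSymm) (hcard : Fintype.card n ≤ Fintype.card p) :
    ∃ X : Matrix n p K, B = X * Xᵀ := by
  obtain ⟨Y, rfl⟩ := hB.exists_eq_mul_transpose
  obtain ⟨e⟩ : Nonempty (Fin (Fintype.card n) ↪ p) :=
    Function.Embedding.nonempty_of_card_le (by simpa using hcard)
  refine ⟨Y * (1 : Matrix p p K).submatrix e id, ?_⟩
  rw [transpose_mul, Matrix.mul_assoc, ← Matrix.mul_assoc _ _ Yᵀ,
    submatrix_one_mul_transpose_submatrix_one e.injective, Matrix.one_mul]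

end Field

end Matrix

/-- Every complex symmetric `N × N` matrix `B` admits, for every `K ≥ N`,
a decomposition `B = X · Xᵀ` with `X` an `N × K` complex matrix. -/
theorem symm_eq_XXT {N K : ℕ} (hK : N ≤ K)
    (B : Matrix (Fin N) (Fin N) ℂ) (hB : Bᵀ = B) :
    ∃ X : Matrix (Fin N) (Fin K) ℂ, B = X * Xᵀ := by
  exact IsSymm.exists_eq_mul_transpose_of_card_le hB (by simpa using hK)
end

section
/- Let N be a positive even integer, M a positive integer, and K a positive integer. Suppose Y is an N×K complex matrix each of whose entries has the form (x + i·y)/√M with x, y ∈ ℤ. Then M^N · |Haf(Y·Yᵀ)|² is a nonnegative integer; that is, there exists k ∈ ℕ with |Haf(Y·Yᵀ)|² = k / M^N. -/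
open Matrix BigOperators

/-- The Hafnian of an `m × m` complex matrix: the sum over all perfect matchings
(encoded as fixed-point-free involutive permutations) of the products of the
matrix entries over the pairs of the matching. -/
noncomputable def hafnian {m : ℕ} (B : Matrix (Fin m) (Fin m) ℂ) : ℂ :=
  ∑ σ ∈ Finset.univ.filter
      (fun σ : Equiv.Perm (Fin m) => σ * σ = 1 ∧ ∀ i, σ i ≠ i),
    ∏ i ∈ Finset.univ.filter (fun i : Fin m => i < σ i), B i (σ i)

/-!
Write `Y = Z / √M` with `Z` a matrix of Gaussian integers. Every perfect matching of `2n`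
points has `n` pairs, so `Haf (M • Y Yᵀ) = M ^ n · Haf (Y Yᵀ)`, while `M • Y Yᵀ = Z Zᵀ` has
Gaussian integer entries, hence so does its Hafnian `g`. Then
`M ^ N · |Haf (Y Yᵀ)|² = |g|²` is the norm of a Gaussian integer.
-/

open Finset

/-- A fixed-point-free involution pairs the points `i < σ i` with the points `σ i < i`. -/
theorem Function.Involutive.card_filter_lt_mul_two {α : Type*} [Fintype α] [LinearOrder α]
    {σ : α → α} (hσ : Function.Involutive σ) (hfree : ∀ i, σ i ≠ i) :
    #{i | i < σ i} * 2 = Fintype.card α := by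
  have hswap : #{i | σ i < i} = #{i | i < σ i} :=
    card_bij (fun i _ => σ i) (by simp [hσ _]) (fun _ _ _ _ h => hσ.injective h)
      (fun j hj => ⟨σ j, by simpa [hσ j] using hj, hσ j⟩)
  have hsplit : #{i | ¬ i < σ i} = #{i | σ i < i} :=
    congrArg card (filter_congr fun i _ => by rw [not_lt, (hfree i).le_iff_lt])
  have hpart := card_filter_add_card_filter_not (s := univ) (fun i => i < σ i)
  rw [hsplit, hswap, card_univ] at hpart
  omega

theorem hafnian_smul {m : ℕ} (c : ℂ) (B : Matrix (Fin m) (Fin m) ℂ) :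
    hafnian (c • B) = c ^ (m / 2) * hafnian B := by
  rw [hafnian, hafnian, mul_sum]
  refine sum_congr rfl fun σ hσ => ?_
  obtain ⟨hsq, hfree⟩ := (mem_filter.mp hσ).2
  have hσ : Function.Involutive σ := fun i => by
    rw [← Equiv.Perm.mul_apply, hsq, Equiv.Perm.one_apply]
  have hcard := hσ.card_filter_lt_mul_two hfree
  rw [Fintype.card_fin] at hcard
  simp only [Matrix.smul_apply, smul_eq_mul, prod_mul_distrib, prod_const]
  congr 2
  omega

theorem hafnian_mem_subring {m : ℕ} (S : Subring ℂ) (B : Matrix (Fin m) (Fin m) ℂ)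
    (hB : ∀ i j, B i j ∈ S) : hafnian B ∈ S :=
  S.sum_mem fun σ _ => S.prod_mem fun i _ => hB i (σ i)

theorem mul_transpose_mem_subring {R m n : Type*} [Ring R] [Fintype n] (S : Subring R)
    (Z : Matrix m n R) (hZ : ∀ i j, Z i j ∈ S) (i j : m) : (Z * Zᵀ) i j ∈ S := by
  rw [mul_apply]
  exact S.sum_mem fun b _ => S.mul_mem (hZ i b) (hZ j b)

theorem GaussianInt.sq_norm_toComplex (z : GaussianInt) :
    ‖(z : ℂ)‖ ^ 2 = (z.norm.natAbs : ℝ) := by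
  rw [Complex.sq_norm, GaussianInt.natCast_natAbs_norm, GaussianInt.intCast_real_norm]

theorem haf_sq_integer_multiple_general {N M K : ℕ} (hNe : Even N)
    (hM : 0 < M) (Y : Matrix (Fin N) (Fin K) ℂ)
    (hY : ∀ a b, ∃ x y : ℤ,
      Y a b = ((x : ℂ) + Complex.I * (y : ℂ)) / (Real.sqrt M : ℂ)) :
    ∃ k : ℕ, ‖hafnian (Y * Yᵀ)‖ ^ 2 = (k : ℝ) / (M : ℝ) ^ N := by
  set S := GaussianInt.toComplex.range
  set s : ℂ := (Real.sqrt M : ℂ)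
  have hs : s ≠ 0 := by simp [s, hM.ne']
  have hss : s * s = M := by
    rw [← Complex.ofReal_mul, Real.mul_self_sqrt M.cast_nonneg, Complex.ofReal_natCast]
  have hZ : ∀ a b, (s • Y) a b ∈ S := fun a b => by
    obtain ⟨x, y, hxy⟩ := hY a b
    exact ⟨⟨x, y⟩, by rw [GaussianInt.toComplex_def', Matrix.smul_apply, hxy, smul_eq_mul,
      mul_div_cancel₀ _ hs, mul_comm]⟩
  have hMYY : (M : ℂ) • (Y * Yᵀ) = s • Y * (s • Y)ᵀ := by
    rw [transpose_smul, Matrix.smul_mul, Matrix.mul_smul, smul_smul, hss]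
  obtain ⟨g, hg⟩ : hafnian ((M : ℂ) • (Y * Yᵀ)) ∈ S := by
    rw [hMYY]
    exact hafnian_mem_subring S _ (mul_transpose_mem_subring S _ hZ)
  refine ⟨g.norm.natAbs, eq_div_of_mul_eq (by positivity) ?_⟩
  rw [← GaussianInt.sq_norm_toComplex, hg, hafnian_smul, norm_mul, norm_pow,
    Complex.norm_natCast, mul_pow, ← pow_mul, Nat.div_mul_cancel hNe.two_dvd, mul_comm]

/-- If every entry of the `N × K` matrix `Y` has the form `(x + i·y)/√M` with
`x, y ∈ ℤ`, then `M^N · |Haf(Y·Yᵀ)|²` is a nonnegative integer. -/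
theorem haf_sq_integer_multiple {N M K : ℕ} (hN : 0 < N) (hNe : Even N)
    (hM : 0 < M) (hK : 0 < K) (Y : Matrix (Fin N) (Fin K) ℂ)
    (hY : ∀ a b, ∃ x y : ℤ,
      Y a b = ((x : ℂ) + Complex.I * (y : ℂ)) / (Real.sqrt M : ℂ)) :
    ∃ k : ℕ, ‖hafnian (Y * Yᵀ)‖ ^ 2 = (k : ℝ) / (M : ℝ) ^ N :=
  haf_sq_integer_multiple_general hNe hM Y hY
end

section
/- For every real number r and every positive integer K, the lossless photon-number distribution attains its maximum at the photon number n* = 2·⌊(K−1)·sinh²(r)⌋; that is, setting j* = ⌊(K−1)·sinh²(r)⌋, for all j ∈ ℕ one has C(K+j−1, j) · tanh(r)^{2j} ≤ C(K+j*−1, j*) · tanh(r)^{2j*}. -/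
/-!
With `q = tanh² r`, the terms are the negative binomial weights `w m = C(K+m-1, m) q^m`, whose
consecutive ratio is `w (m+1) / w m = (K+m) q / (m+1)`. This ratio is at least `1` exactly when
`m + 1 ≤ (K-1) q / (1-q)`, and `q / (1-q) = sinh² r`; so the weights increase up to
`⌊(K-1) sinh² r⌋` and decrease from there on.
-/

open Real

def negBinomialWeight {𝕜 : Type*} [Semiring 𝕜] (K : ℕ) (q : 𝕜) (m : ℕ) : 𝕜 :=
  (K + m - 1).choose m * q ^ m

theorem Nat.add_one_mul_choose_add_eq (K m : ℕ) :
    (m + 1) * (K + m).choose (m + 1) = (K + m) * (K + m - 1).choose m := by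
  rcases Nat.eq_zero_or_pos (K + m) with h | h
  · simp [h]
  · have := Nat.add_one_mul_choose_eq (K + m - 1) m
    rw [Nat.sub_add_cancel h] at this
    rw [this, mul_comm]

theorem le_apply_of_le_succ_of_succ_le {α : Type*} [Preorder α] {f : ℕ → α} {N : ℕ}
    (hup : ∀ m < N, f m ≤ f (m + 1)) (hdown : ∀ m ≥ N, f (m + 1) ≤ f m) (j : ℕ) :
    f j ≤ f N := by
  rcases le_total j N with hj | hj
  · exact Nat.decreasingInduction (fun m hm ih => (hup m hm).trans ih) le_rfl hj
  · exact antitoneOn_nat_Ici_of_succ_le hdown (le_refl N) hj hj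

section NegBinomial

variable {𝕜 : Type*} [Field 𝕜] [LinearOrder 𝕜] [IsStrictOrderedRing 𝕜] {K : ℕ} {q : 𝕜} {m : ℕ}

theorem negBinomialWeight_nonneg (hq : 0 ≤ q) (m : ℕ) : 0 ≤ negBinomialWeight K q m := by
  unfold negBinomialWeight; positivity

theorem add_one_mul_negBinomialWeight_succ (K : ℕ) (q : 𝕜) (m : ℕ) :
    (m + 1) * negBinomialWeight K q (m + 1) = (K + m) * q * negBinomialWeight K q m := by
  have hK : K + (m + 1) - 1 = K + m := by omega
  have hchoose := congrArg (Nat.cast (R := 𝕜)) (Nat.add_one_mul_choose_add_eq K m)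
  push_cast at hchoose
  simp only [negBinomialWeight, hK, pow_succ]
  linear_combination q ^ m * q * hchoose

theorem negBinomialWeight_le_succ (hq : 0 ≤ q) (h : (m + 1 : 𝕜) ≤ (K + m) * q) :
    negBinomialWeight K q m ≤ negBinomialWeight K q (m + 1) := by
  refine le_of_mul_le_mul_left ?_ (by positivity : (0 : 𝕜) < m + 1)
  rw [add_one_mul_negBinomialWeight_succ]
  exact mul_le_mul_of_nonneg_right h (negBinomialWeight_nonneg hq m)

theorem negBinomialWeight_succ_le (hq : 0 ≤ q) (h : (K + m) * q ≤ (m + 1 : 𝕜)) :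
    negBinomialWeight K q (m + 1) ≤ negBinomialWeight K q m := by
  refine le_of_mul_le_mul_left ?_ (by positivity : (0 : 𝕜) < m + 1)
  rw [add_one_mul_negBinomialWeight_succ]
  exact mul_le_mul_of_nonneg_right h (negBinomialWeight_nonneg hq m)

theorem negBinomialWeight_le_mode [FloorSemiring 𝕜] (hq₀ : 0 ≤ q) (hq₁ : q < 1) (j : ℕ) :
    negBinomialWeight K q j ≤ negBinomialWeight K q ⌊((K : 𝕜) - 1) * (q / (1 - q))⌋₊ := by
  have h1q : 0 < 1 - q := sub_pos.mpr hq₁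
  refine le_apply_of_le_succ_of_succ_le (fun m hm => ?_) (fun m hm => ?_) j
  · apply negBinomialWeight_le_succ hq₀
    have hx := (Nat.le_floor_iff' m.succ_ne_zero).mp hm
    rw [mul_div_assoc', le_div_iff₀ h1q] at hx
    push_cast at hx
    linarith
  · apply negBinomialWeight_succ_le hq₀
    have hx := (Nat.floor_lt' m.succ_ne_zero).mp (Nat.lt_succ_of_le hm)
    rw [mul_div_assoc', div_lt_iff₀ h1q] at hx
    push_cast at hx
    linarith

end NegBinomial

theorem Real.tanh_sq_div_one_sub_tanh_sq (x : ℝ) : tanh x ^ 2 / (1 - tanh x ^ 2) = sinh x ^ 2 := by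
  have hc : cosh x ≠ 0 := (cosh_pos x).ne'
  have h : 1 - tanh x ^ 2 = (cosh x ^ 2)⁻¹ := by
    rw [tanh_eq_sinh_div_cosh, div_pow, cosh_sq x]
    field_simp
    ring
  rw [h, div_inv_eq_mul, tanh_eq_sinh_div_cosh, div_pow, div_mul_cancel₀ _ (pow_ne_zero 2 hc)]

theorem lossless_distribution_mode_general (r : ℝ) (K : ℕ) :
    ∀ j : ℕ,
      ((K + j - 1).choose j : ℝ) * Real.tanh r ^ (2 * j)
        ≤ ((K + (⌊((K : ℝ) - 1) * Real.sinh r ^ 2⌋₊) - 1).choose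
              (⌊((K : ℝ) - 1) * Real.sinh r ^ 2⌋₊) : ℝ)
          * Real.tanh r ^ (2 * ⌊((K : ℝ) - 1) * Real.sinh r ^ 2⌋₊) := by
  intro j
  simp only [pow_mul, ← tanh_sq_div_one_sub_tanh_sq r]
  exact negBinomialWeight_le_mode (sq_nonneg _) (tanh_sq_lt_one r) j

/-- The lossless photon-number distribution attains its maximum at
`n* = 2·⌊(K−1)·sinh²(r)⌋`: with `j* = ⌊(K−1)·sinh²(r)⌋`, for every `j` we have
`C(K+j−1, j)·tanh(r)^{2j} ≤ C(K+j*−1, j*)·tanh(r)^{2j*}`. -/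
theorem lossless_distribution_mode (r : ℝ) (K : ℕ) (hK : 0 < K) :
    ∀ j : ℕ,
      ((K + j - 1).choose j : ℝ) * Real.tanh r ^ (2 * j)
        ≤ ((K + (⌊((K : ℝ) - 1) * Real.sinh r ^ 2⌋₊) - 1).choose
              (⌊((K : ℝ) - 1) * Real.sinh r ^ 2⌋₊) : ℝ)
          * Real.tanh r ^ (2 * ⌊((K : ℝ) - 1) * Real.sinh r ^ 2⌋₊) :=
  lossless_distribution_mode_general r K
end
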